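/- More generally, with pilot contamination, C = R − p τ_p R Ψ⁻¹ R is positive semidefinite where Ψ = Σ_{l ∈ P} p_l τ_p R_l + σ² I, provided each R_l is Hermitian positive semidefinite, p = p_k for some k ∈ P, and σ² > 0: since Ψ ⪰ p τ_p R in the Loewner order, R Ψ⁻¹ R ⪯ (1/(p τ_p)) R... specifically p τ_p R Ψ⁻¹ R ⪯ R. -/

import Mathlib

/-!
Write `A = p τ_p R` and `Ψ = A + E` with `E = Σ_{l ≠ k} p_l τ_p R_l + σ² I ⪰ 0`. The block
matrix `[[Ψ, A], [A, A]] = [[E, 0], [0, 0]] + [[A, A], [A, A]]` is positive semidefinite, and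
`Ψ ≻ 0`, so its Schur complement `A - A Ψ⁻¹ A` is positive semidefinite. Dividing by `p τ_p`
gives `R - p τ_p R Ψ⁻¹ R ⪰ 0`.
-/

open Matrix ComplexOrder

namespace Matrix

variable {n : Type*} [Fintype n] [DecidableEq n]

section Field

variable {K : Type*} [Field K] [PartialOrder K] [StarRing K] [StarOrderedRing K]

theorem PosSemidef.fromBlocks_of_sub {A B : Matrix n n K} (hA : A.PosSemidef)
    (hAB : (B - A).PosSemidef) : (fromBlocks B A A A).PosSemidef := by
  have h₁ := hAB.conjTranspose_mul_mul_same (fromCols (1 : Matrix n n K) (0 : Matrix n n K))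
  have h₂ := hA.conjTranspose_mul_mul_same (fromCols (1 : Matrix n n K) (1 : Matrix n n K))
  rw [conjTranspose_fromCols_eq_fromRows_conjTranspose, fromRows_mul, fromRows_mul_fromCols]
    at h₁ h₂
  simp only [conjTranspose_one, conjTranspose_zero, Matrix.one_mul, Matrix.mul_one,
    Matrix.zero_mul, Matrix.mul_zero] at h₁ h₂
  simpa only [fromBlocks_add, sub_add_cancel, add_zero, zero_add] using h₁.add h₂

theorem PosSemidef.sub_mul_inv_mul_self {A B : Matrix n n K} (hA : A.PosSemidef)
    (hB : B.PosDef) (hAB : (B - A).PosSemidef) : (A - A * B⁻¹ * A).PosSemidef := by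
  let := hB.isUnit.invertible
  have hschur := (hB.fromBlocks₁₁ A A).1 (by
    rw [hA.isHermitian.eq]
    exact hA.fromBlocks_of_sub hAB)
  rwa [hA.isHermitian.eq] at hschur

end Field

theorem PosSemidef.sub_smul_mul_inv_mul_self {𝕜 : Type*} [RCLike 𝕜] {R B : Matrix n n 𝕜}
    {c : 𝕜} (hR : R.PosSemidef) (hc : 0 < c) (hB : B.PosDef) (hRB : (B - c • R).PosSemidef) :
    (R - c • (R * B⁻¹ * R)).PosSemidef := by
  have hcR := (hR.smul hc.le).sub_mul_inv_mul_self hB hRB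
  convert hcR.smul (RCLike.inv_pos_of_pos hc).le using 1
  simp only [smul_sub, smul_smul, Matrix.smul_mul, Matrix.mul_smul, inv_mul_cancel₀ hc.ne',
    one_smul, ← mul_assoc, one_mul]

end Matrix

/-- Error covariance with pilot contamination:
`C = R_k - p_k τ_p R_k Ψ⁻¹ R_k` is positive semidefinite, where
`Ψ = Σ_{l ∈ P} p_l τ_p R_l + σ² I`. -/
theorem error_covariance_psd_pilot_contamination {N : ℕ} {ι : Type*}
    (P : Finset ι) (R : ι → Matrix (Fin N) (Fin N) ℂ)
    (hR : ∀ l ∈ P, (R l).PosSemidef)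
    (p : ι → ℝ) (hp : ∀ l ∈ P, 0 < p l)
    (τp σsq : ℝ) (hτ : 0 < τp) (hσ : 0 < σsq)
    (k : ι) (hk : k ∈ P) :
    (R k - (p k * τp : ℂ) •
        (R k *
          ((∑ l ∈ P, (p l * τp : ℂ) • R l) +
            (σsq : ℂ) • (1 : Matrix (Fin N) (Fin N) ℂ))⁻¹ * R k)).PosSemidef := by
  classical
  have hweight : ∀ l ∈ P, (0 : ℂ) < p l * τp := fun l hl => by
    exact_mod_cast mul_pos (hp l hl) hτ
  have hterm : ∀ l ∈ P, ((p l * τp : ℂ) • R l).PosSemidef := fun l hl =>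
    (hR l hl).smul (hweight l hl).le
  have hnoise : ((σsq : ℂ) • (1 : Matrix (Fin N) (Fin N) ℂ)).PosDef :=
    PosDef.one.smul (by exact_mod_cast hσ)
  refine (hR k hk).sub_smul_mul_inv_mul_self (hweight k hk)
    (PosDef.posSemidef_add (posSemidef_sum P hterm) hnoise) ?_
  rw [← Finset.add_sum_erase P _ hk, add_assoc, add_sub_cancel_left]
  exact (posSemidef_sum _ fun l hl => hterm l (Finset.mem_of_mem_erase hl)).add
    hnoise.posSemidef
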